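/- arXiv:2302.02548 — 2 statements merged into one kernel-verified Lean document; each statement's English description precedes it below -/
import Mathlib

section
/- Consider a 1-in-3-SAT instance with n boolean variables x_1,…,x_n and m clauses c_1,…,c_m, each a disjunction of three literals. For each clause c_k define C_k, D_k ∈ {0,1}^n by (C_k)_i = 1 if and only if the literal x_i occurs in c_k and (D_k)_i = 1 if and only if the literal ¬x_i occurs in c_k. Define A ∈ ℝ^{(m+n)×2n} whose first m rows are [C_kᵀ D_kᵀ] for k = 1,…,m and whose last n rows are [e_iᵀ e_iᵀ] for i = 1,…,n (with e_i the i-th standard basis vector of ℝ^n), and let b = (1,…,1)ᵀ ∈ ℝ^{m+n}. Then the instance is 1-in-3 satisfiable, i.e. there is a boolean assignment under which exactly one literal of each clause is true, if and only if there exist y, z ∈ ℝ^n with A·(y, z) = b and ‖y‖₀ + ‖z‖₀ ≤ n. -/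
open scoped Classical

/-- `‖v‖₀`, the number of nonzero entries of a vector. -/
noncomputable def l0norm {ι : Type*} (v : ι → ℝ) : ℕ := Nat.card {i : ι // v i ≠ 0}

/-- A literal `(i, pol)` is true under the boolean assignment `σ`. -/
def litTrueB {n : ℕ} (σ : Fin n → Bool) (l : Fin n × Bool) : Prop := σ l.1 = l.2

lemma l0norm_eq_card {ι : Type*} [Fintype ι] (v : ι → ℝ) :
    l0norm v = (Finset.univ.filter (fun i => v i ≠ 0)).card := by
  rw [l0norm, Nat.card_eq_fintype_card, Fintype.card_subtype]

lemma existsUnique_iff_card_one {α : Type*} [Fintype α] (P : α → Prop) :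
    (∃! a, P a) ↔ (Finset.univ.filter P).card = 1 := by
  rw [Finset.card_eq_one]
  constructor
  · rintro ⟨a, ha, hu⟩
    exact ⟨a, by
      ext x
      simp only [Finset.mem_filter, Finset.mem_univ, true_and, Finset.mem_singleton]
      exact ⟨fun hx => hu x hx, fun hx => hx ▸ ha⟩⟩
  · rintro ⟨a, ha⟩
    refine ⟨a, ?_, fun x hx => ?_⟩
    · have : a ∈ Finset.univ.filter P := ha ▸ Finset.mem_singleton_self a
      exact (Finset.mem_filter.mp this).2
    · have : x ∈ Finset.univ.filter P := Finset.mem_filter.mpr ⟨Finset.mem_univ x, hx⟩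
      rw [ha, Finset.mem_singleton] at this
      exact this

lemma key_count {n m : ℕ} (clauses : Fin m → Fin 3 → Fin n × Bool)
    (C D : Fin m → Fin n → ℝ)
    (hC : ∀ k i, C k i = if (i, true) ∈ Set.range (clauses k) then 1 else 0)
    (hD : ∀ k i, D k i = if (i, false) ∈ Set.range (clauses k) then 1 else 0)
    (σ : Fin n → Bool) (k : Fin m) :
    (∑ i, C k i * (if σ i then 1 else 0)) + (∑ i, D k i * (if σ i then 0 else 1)) =
      ((Finset.univ.filter (fun l : Fin n × Bool =>
        l ∈ Set.range (clauses k) ∧ litTrueB σ l)).card : ℝ) := by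
  rw [← Finset.sum_boole]
  rw [Fintype.sum_prod_type, Finset.sum_comm, Fintype.sum_bool]
  congr 1
  · refine Finset.sum_congr rfl fun i _ => ?_
    rw [hC]
    by_cases h1 : (i, true) ∈ Set.range (clauses k) <;> cases h2 : σ i <;>
      simp [litTrueB, h1, h2]
  · refine Finset.sum_congr rfl fun i _ => ?_
    rw [hD]
    by_cases h1 : (i, false) ∈ Set.range (clauses k) <;> cases h2 : σ i <;>
      simp [litTrueB, h1, h2]

/-- A 1-in-3-SAT instance with clause indicator vectors `C_k, D_k`,
reduction matrix `A = [[C, D], [I, I]]` and right hand side `b = (1, …, 1)`, is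
1-in-3 satisfiable iff there are `y, z ∈ ℝ^n` with `A (y, z) = b` and
`‖y‖₀ + ‖z‖₀ ≤ n`. -/
theorem one_in_three_sat_iff_sparse_solution (n m : ℕ)
    (clauses : Fin m → Fin 3 → Fin n × Bool)
    (C D : Fin m → Fin n → ℝ)
    (hC : ∀ k i, C k i = if (i, true) ∈ Set.range (clauses k) then 1 else 0)
    (hD : ∀ k i, D k i = if (i, false) ∈ Set.range (clauses k) then 1 else 0)
    (A : Matrix (Fin m ⊕ Fin n) (Fin n ⊕ Fin n) ℝ)
    (hA : A = Matrix.fromBlocks (Matrix.of C) (Matrix.of D) 1 1)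
    (b : Fin m ⊕ Fin n → ℝ) (hb : b = fun _ => 1) :
    (∃ σ : Fin n → Bool, ∀ k : Fin m,
        ∃! l : Fin n × Bool, l ∈ Set.range (clauses k) ∧ litTrueB σ l) ↔
      (∃ y z : Fin n → ℝ,
        A.mulVec (Sum.elim y z) = b ∧ l0norm y + l0norm z ≤ n) := by
  subst hA hb
  constructor
  · rintro ⟨σ, hσ⟩
    refine ⟨fun i => if σ i then 1 else 0, fun i => if σ i then 0 else 1, ?_, ?_⟩
    · rw [Matrix.fromBlocks_mulVec]
      ext j
      cases j with
      | inl k =>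
        have hcard := (existsUnique_iff_card_one _).mp (hσ k)
        have hkc := key_count clauses C D hC hD σ k
        rw [Finset.filter_congr_decidable] at hcard hkc
        rw [hcard] at hkc
        simp only [Sum.elim_inl, Sum.elim_comp_inl, Sum.elim_comp_inr, Pi.add_apply,
          Matrix.mulVec, dotProduct, Matrix.of_apply]
        push_cast at hkc
        linarith [hkc]
      | inr i =>
        simp [Matrix.mulVec, dotProduct]
        by_cases h : σ i <;> simp [h]
    · rw [l0norm_eq_card, l0norm_eq_card]
      have h1 : (Finset.univ.filter (fun i => (if σ i then (1:ℝ) else 0) ≠ 0)) =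
          Finset.univ.filter (fun i => σ i = true) := by
        ext i; by_cases h : σ i <;> simp [h]
      have h2 : (Finset.univ.filter (fun i => (if σ i then (0:ℝ) else 1) ≠ 0)) =
          Finset.univ.filter (fun i => ¬ (σ i = true)) := by
        ext i; by_cases h : σ i <;> simp [h]
      rw [h1, h2, Finset.card_filter_add_card_filter_not]
      simp
  · rintro ⟨y, z, heq, hl0⟩
    -- bottom rows: y i + z i = 1
    rw [Matrix.fromBlocks_mulVec] at heq
    have hsum : ∀ i, y i + z i = 1 := by
      intro i
      have := congrFun heq (Sum.inr i)
      simpa [Matrix.one_mulVec] using this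
    -- exactly one of y i, z i is nonzero
    have hunion : (Finset.univ.filter (fun i => y i ≠ 0)) ∪
        (Finset.univ.filter (fun i => z i ≠ 0)) = Finset.univ := by
      ext i
      simp only [Finset.mem_union, Finset.mem_filter, Finset.mem_univ, true_and, iff_true]
      by_contra h
      push_neg at h
      have := hsum i
      rw [h.1, h.2] at this
      norm_num at this
    have hinter : (Finset.univ.filter (fun i => y i ≠ 0)) ∩
        (Finset.univ.filter (fun i => z i ≠ 0)) = ∅ := by
      rw [l0norm_eq_card, l0norm_eq_card] at hl0
      have := Finset.card_union_add_card_inter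
        (Finset.univ.filter (fun i => y i ≠ 0)) (Finset.univ.filter (fun i => z i ≠ 0))
      rw [hunion] at this
      simp only [Finset.card_univ, Fintype.card_fin] at this
      have hle : ((Finset.univ.filter (fun i => y i ≠ 0)) ∩
          (Finset.univ.filter (fun i => z i ≠ 0))).card = 0 := by omega
      exact Finset.card_eq_zero.mp hle
    have hkey : ∀ i, (y i = 1 ∧ z i = 0) ∨ (y i = 0 ∧ z i = 1) := by
      intro i
      by_cases hy : y i = 0
      · right; exact ⟨hy, by have := hsum i; linarith⟩
      · left
        have hz : z i = 0 := by
          by_contra hz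
          have : i ∈ (Finset.univ.filter (fun i => y i ≠ 0)) ∩
              (Finset.univ.filter (fun i => z i ≠ 0)) := by
            simp [hy, hz]
          rw [hinter] at this
          exact absurd this (Finset.notMem_empty i)
        exact ⟨by have := hsum i; linarith, hz⟩
    set σ : Fin n → Bool := fun i => if y i = 0 then false else true with hσdef
    have hy : y = fun i => if σ i then 1 else 0 := by
      funext i
      rcases hkey i with ⟨h1, _⟩ | ⟨h1, _⟩ <;> simp [hσdef, h1]
    have hz : z = fun i => if σ i then 0 else 1 := by
      funext i
      rcases hkey i with ⟨h1, h2⟩ | ⟨h1, h2⟩ <;> simp [hσdef, h1, h2]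
    refine ⟨σ, fun k => ?_⟩
    rw [existsUnique_iff_card_one]
    have htop : (∑ i, C k i * y i) + (∑ i, D k i * z i) = 1 := by
      have := congrFun heq (Sum.inl k)
      simpa [Matrix.mulVec, dotProduct] using this
    rw [hy, hz] at htop
    rw [key_count clauses C D hC hD σ k] at htop
    rw [Finset.filter_congr_decidable] at htop ⊢
    exact_mod_cast htop
end

section
/- In the block-random construction, let M ∈ ℝ^{m×n} be such that M S has orthonormal columns, and choose the diagonal scaling D_{jj} = ‖M_{·J_l}‖_F^{−1} for every j ∈ J_l, where M_{·J} is the column submatrix of M indexed by J. Then for every u ∈ ℝ^p: E‖M X u‖² = ‖u‖². -/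
/-!
Write `w = Zᵀu` and `v = (I - ZZᵀ)u`. Then `M X u = (MS) w + (MD) R v` is a constant vector plus a
linear form in the independent, centred entries of `R`, so its expected squared norm is
`‖MS w‖² + ∑ (MD)ᵢⱼ² vₖ² E Rⱼₖ²`. The first term is `‖w‖²` since `MS` has orthonormal columns.
For `k ∈ K_l` only the rows `j ∈ J_l` carry variance, and the scaling makes
`∑_{j ∈ J_l} ‖M_{·j}‖² D_jj² = 1`, so the second term is `‖v‖²`. Finally `‖w‖² + ‖v‖² = ‖u‖²`
because `ZZᵀ` is an orthogonal projection.
-/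

open MeasureTheory ProbabilityTheory Matrix

section SecondMoment

variable {Ω ι : Type*} [MeasurableSpace Ω] {μ : Measure Ω} [IsProbabilityMeasure μ] [Fintype ι]
  {X : ι → Ω → ℝ}

lemma memLp_const_add_sum_mul (hX : ∀ i, MemLp (X i) 2 μ) (a : ℝ) (c : ι → ℝ) :
    MemLp (fun ω => a + ∑ i, c i * X i ω) 2 μ := by
  refine (memLp_const a).add ?_
  simpa [Finset.sum_fn] using memLp_finsetSum' Finset.univ fun i _ => (hX i).const_mul (c i)

lemma integral_sq_const_add_sum_mul (hX : ∀ i, MemLp (X i) 2 μ)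
    (hindep : Pairwise fun i j => X i ⟂ᵢ[μ] X j) (hmean : ∀ i, μ[X i] = 0) (a : ℝ) (c : ι → ℝ) :
    ∫ ω, (a + ∑ i, c i * X i ω) ^ 2 ∂μ = a ^ 2 + ∑ i, c i ^ 2 * ∫ ω, X i ω ^ 2 ∂μ := by
  set Y : ι → Ω → ℝ := fun i ω => c i * X i ω
  have hY : ∀ i, MemLp (Y i) 2 μ := fun i => (hX i).const_mul (c i)
  have hsum : MemLp (∑ i, Y i) 2 μ := memLp_finsetSum' _ fun i _ => hY i
  have hmeanY : μ[∑ i, Y i] = 0 := by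
    simp [Y, integral_finsetSum _ fun i _ => (hY i).integrable one_le_two, integral_const_mul,
      hmean]
  have hvar : Var[∑ i, Y i; μ] = ∑ i, c i ^ 2 * ∫ ω, X i ω ^ 2 ∂μ := by
    rw [IndepFun.variance_sum (fun i _ => hY i) fun i _ j _ hij =>
      (hindep hij).comp (measurable_const_mul (c i)) (measurable_const_mul (c j))]
    refine Finset.sum_congr rfl fun i _ => ?_
    rw [variance_const_mul, variance_of_integral_eq_zero (hX i).aemeasurable (hmean i)]
  have hshift : μ[fun ω => a + (∑ i, Y i) ω] = a := by
    rw [integral_add (integrable_const a) (hsum.integrable one_le_two), hmeanY]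
    simp
  have key := variance_eq_sub ((memLp_const a).add hsum)
  rw [Pi.add_def, variance_const_add hsum.aestronglyMeasurable, hvar, hshift] at key
  simp only [Finset.sum_apply, Y, Pi.pow_apply] at key
  linarith

lemma integral_sum_sq_const_add_sum_mul {κ : Type*} [Fintype κ] (hX : ∀ i, MemLp (X i) 2 μ)
    (hindep : Pairwise fun i j => X i ⟂ᵢ[μ] X j) (hmean : ∀ i, μ[X i] = 0) (a : κ → ℝ)
    (c : κ → ι → ℝ) :
    ∫ ω, ∑ k, (a k + ∑ i, c k i * X i ω) ^ 2 ∂μ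
      = ∑ k, a k ^ 2 + ∑ k, ∑ i, c k i ^ 2 * ∫ ω, X i ω ^ 2 ∂μ := by
  rw [integral_finsetSum _ fun k _ => (memLp_const_add_sum_mul hX (a k) (c k)).integrable_sq,
    ← Finset.sum_add_distrib]
  exact Finset.sum_congr rfl fun k _ => integral_sq_const_add_sum_mul hX hindep hmean (a k) (c k)

end SecondMoment

namespace Matrix

variable {m n p r : Type*}

lemma mulVec_dotProduct_mulVec_of_transpose_mul_self_eq_one [Fintype m] [Fintype n]
    [DecidableEq n] {A : Matrix m n ℝ} (hA : Aᵀ * A = 1) (x : n → ℝ) :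
    A *ᵥ x ⬝ᵥ A *ᵥ x = x ⬝ᵥ x := by
  rw [dotProduct_mulVec, ← mulVec_transpose, mulVec_mulVec, hA, one_mulVec]

lemma sum_sq_mulVec_of_transpose_mul_self_eq_one [Fintype m] [Fintype n] [DecidableEq n]
    {A : Matrix m n ℝ} (hA : Aᵀ * A = 1) (x : n → ℝ) : ∑ i, (A *ᵥ x) i ^ 2 = ∑ j, x j ^ 2 := by
  simpa only [dotProduct, sq] using mulVec_dotProduct_mulVec_of_transpose_mul_self_eq_one hA x

lemma sum_sq_transpose_mulVec_add_sum_sq_one_sub_mulVec [Fintype p] [Fintype r] [DecidableEq p]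
    [DecidableEq r] {Z : Matrix p r ℝ} (hZ : Zᵀ * Z = 1) (u : p → ℝ) :
    ∑ l, (Zᵀ *ᵥ u) l ^ 2 + ∑ k, ((1 - Z * Zᵀ) *ᵥ u) k ^ 2 = ∑ k, u k ^ 2 := by
  set w := Zᵀ *ᵥ u
  have hcross : u ⬝ᵥ Z *ᵥ w = w ⬝ᵥ w := by
    rw [dotProduct_mulVec, ← mulVec_transpose]
  have hsplit : (1 - Z * Zᵀ) *ᵥ u = u - Z *ᵥ w := by
    rw [sub_mulVec, one_mulVec, ← mulVec_mulVec]
  have hnorm := mulVec_dotProduct_mulVec_of_transpose_mul_self_eq_one hZ w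
  suffices w ⬝ᵥ w + (u - Z *ᵥ w) ⬝ᵥ (u - Z *ᵥ w) = u ⬝ᵥ u by
    simpa only [hsplit, dotProduct, sq] using this
  rw [sub_dotProduct, dotProduct_sub, dotProduct_sub, dotProduct_comm (Z *ᵥ w) u, hcross, hnorm]
  ring

lemma transpose_mul_self_eq_one_of_disjoint_support [Fintype p] [DecidableEq r]
    {Z : Matrix p r ℝ} (hnorm : ∀ l, ∑ k, Z k l ^ 2 = 1)
    (hdisj : ∀ l l', l ≠ l' → ∀ k, Z k l = 0 ∨ Z k l' = 0) : Zᵀ * Z = 1 := by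
  ext l l'
  rw [mul_apply]
  rcases eq_or_ne l l' with rfl | h
  · simpa [sq] using hnorm l
  · rw [one_apply_ne h]
    exact Finset.sum_eq_zero fun k _ => by rcases hdisj l l' h k with h0 | h0 <;> simp [h0]

lemma sum_sum_sq_pos_of_transpose_mul_self_eq_one [Fintype m] [Fintype n] [DecidableEq r]
    {M : Matrix m n ℝ} {S : Matrix n r ℝ} (hMS : (M * S)ᵀ * (M * S) = 1) {l : r} {J : Finset n}
    (hS : ∀ j, S j l ≠ 0 → j ∈ J) : 0 < ∑ i, ∑ j ∈ J, M i j ^ 2 := by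
  obtain ⟨i, hi⟩ : ∃ i, (M * S) i l ≠ 0 := by
    by_contra! h
    simpa [mul_apply, h] using congr_fun (congr_fun hMS l) l
  obtain ⟨j, -, hj⟩ := Finset.exists_ne_zero_of_sum_ne_zero hi
  refine Finset.sum_pos' (fun _ _ => by positivity) ⟨i, Finset.mem_univ i, ?_⟩
  exact Finset.sum_pos' (fun _ _ => by positivity)
    ⟨j, hS j (right_ne_zero_of_mul hj), by have := left_ne_zero_of_mul hj; positivity⟩

lemma mul_diagonal_mul_mul_mulVec_apply [Fintype n] [Fintype p] [Fintype r] [DecidableEq n]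
    (M : Matrix m n ℝ) (d : n → ℝ) (R : Matrix n p ℝ) (N : Matrix p r ℝ) (u : r → ℝ) (i : m) :
    ((M * (diagonal d * R * N)) *ᵥ u) i
      = ∑ t : n × p, M i t.1 * d t.1 * (N *ᵥ u) t.2 * R t.1 t.2 := by
  rw [← Matrix.mul_assoc, ← Matrix.mul_assoc, ← mulVec_mulVec, Fintype.sum_prod_type,
    Finset.sum_comm]
  simp only [mulVec, dotProduct, mul_apply, diagonal_apply, mul_ite, mul_zero, Finset.sum_ite_eq',
    Finset.mem_univ, if_true, Finset.sum_mul]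
  exact Finset.sum_congr rfl fun j _ => Finset.sum_congr rfl fun k _ => by ring

lemma sum_sum_sq_mul_mul_eq_sum_sq [Fintype m] [Fintype n] [Fintype p] (M : Matrix m n ℝ)
    (d : n → ℝ) (v : p → ℝ) (σ : n × p → ℝ)
    (hσ : ∀ k, ∑ j, (∑ i, M i j ^ 2) * d j ^ 2 * σ (j, k) = 1) :
    ∑ i, ∑ t : n × p, (M i t.1 * d t.1 * v t.2) ^ 2 * σ t = ∑ k, v k ^ 2 := by
  calc ∑ i, ∑ t : n × p, (M i t.1 * d t.1 * v t.2) ^ 2 * σ t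
      = ∑ k, v k ^ 2 * ∑ j, (∑ i, M i j ^ 2) * d j ^ 2 * σ (j, k) := by
        simp only [Fintype.sum_prod_type, Finset.mul_sum, Finset.sum_mul]
        rw [Finset.sum_comm, Finset.sum_comm (s := Finset.univ (α := p))]
        refine Finset.sum_congr rfl fun j _ => ?_
        rw [Finset.sum_comm]
        exact Finset.sum_congr rfl fun k _ => Finset.sum_congr rfl fun i _ => by ring
    _ = ∑ k, v k ^ 2 := by simp [hσ]

lemma sum_sum_sq_mul_inv_sqrt_sq [Fintype m] (M : Matrix m n ℝ) (J : Finset n)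
    (hpos : 0 < ∑ i, ∑ j ∈ J, M i j ^ 2) :
    ∑ j ∈ J, (∑ i, M i j ^ 2) * (√(∑ i, ∑ j' ∈ J, M i j' ^ 2))⁻¹ ^ 2 = 1 := by
  rw [inv_pow, Real.sq_sqrt hpos.le, ← Finset.sum_mul, Finset.sum_comm, mul_inv_cancel₀ hpos.ne']

end Matrix

section BlockRandom

variable {Ω ι κ β : Type*} {R : Ω → Matrix ι κ ℝ} {J : β → Finset ι} {K : β → Finset κ}

lemma block_entry_cases (hRzero : ∀ j k, (∀ l, j ∉ J l ∨ k ∉ K l) → ∀ ω, R ω j k = 0)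
    (j : ι) (k : κ) : (∃ l, j ∈ J l ∧ k ∈ K l) ∨ (fun ω => R ω j k) = 0 := by
  by_cases h : ∃ l, j ∈ J l ∧ k ∈ K l
  · exact Or.inl h
  · exact Or.inr (funext (hRzero j k fun l => not_and_or.1 fun hjk => h ⟨l, hjk⟩))

variable [MeasurableSpace Ω] {μ : Measure Ω}

lemma memLp_entry (hRmeas : ∀ j k, Measurable (fun ω => R ω j k))
    (hRvar : ∀ l, ∀ j ∈ J l, ∀ k ∈ K l, ∫ ω, (R ω j k) ^ 2 ∂μ = 1)
    (hRzero : ∀ j k, (∀ l, j ∉ J l ∨ k ∉ K l) → ∀ ω, R ω j k = 0) (j : ι) (k : κ) :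
    MemLp (fun ω => R ω j k) 2 μ := by
  rcases block_entry_cases hRzero j k with ⟨l, hj, hk⟩ | h0
  · refine (memLp_two_iff_integrable_sq (hRmeas j k).aestronglyMeasurable).2 ?_
    exact Integrable.of_integral_ne_zero (by rw [hRvar l j hj k hk]; exact one_ne_zero)
  · exact h0 ▸ MemLp.zero

lemma integral_entry_eq_zero (hRmean : ∀ l, ∀ j ∈ J l, ∀ k ∈ K l, ∫ ω, R ω j k ∂μ = 0)
    (hRzero : ∀ j k, (∀ l, j ∉ J l ∨ k ∉ K l) → ∀ ω, R ω j k = 0) (j : ι) (k : κ) :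
    ∫ ω, R ω j k ∂μ = 0 := by
  rcases block_entry_cases hRzero j k with ⟨l, hj, hk⟩ | h0
  · exact hRmean l j hj k hk
  · simp [congr_fun h0]

lemma integral_entry_sq_eq_ite [DecidableEq ι]
    (hKdisj : ∀ l l', l ≠ l' → Disjoint (K l) (K l'))
    (hRvar : ∀ l, ∀ j ∈ J l, ∀ k ∈ K l, ∫ ω, (R ω j k) ^ 2 ∂μ = 1)
    (hRzero : ∀ j k, (∀ l, j ∉ J l ∨ k ∉ K l) → ∀ ω, R ω j k = 0) {l : β} {k : κ} (hk : k ∈ K l)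
    (j : ι) : ∫ ω, (R ω j k) ^ 2 ∂μ = if j ∈ J l then 1 else 0 := by
  split_ifs with hj
  · exact hRvar l j hj k hk
  · have hzero := hRzero j k fun l' => by
      rcases eq_or_ne l' l with rfl | hne
      · exact Or.inl hj
      · exact Or.inr (Finset.disjoint_left.1 (hKdisj l l' hne.symm) hk)
    simp [hzero]

end BlockRandom

theorem X_expectation_scaled_general
    (m n p q : ℕ)
    (Ω : Type*) [MeasurableSpace Ω] (μ : Measure Ω) [IsProbabilityMeasure μ]
    (S : Matrix (Fin n) (Fin q) ℝ)
    (Z : Matrix (Fin p) (Fin q) ℝ)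
    (hZnorm : ∀ l, ∑ k, (Z k l) ^ 2 = 1)
    (hZdisj : ∀ l l' : Fin q, l ≠ l' → ∀ k, Z k l = 0 ∨ Z k l' = 0)
    (J : Fin q → Finset (Fin n)) (hJ : ∀ l j, j ∈ J l ↔ S j l ≠ 0)
    (K : Fin q → Finset (Fin p))
    (hKdisj : ∀ l l', l ≠ l' → Disjoint (K l) (K l'))
    (hKcover : ∀ k, ∃ l, k ∈ K l)
    (R : Ω → Matrix (Fin n) (Fin p) ℝ)
    (hRmeas : ∀ j k, Measurable (fun ω => R ω j k))
    (hRindep : iIndepFun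
        (fun jk : Fin n × Fin p => fun ω => R ω jk.1 jk.2) μ)
    (hRmean : ∀ l : Fin q, ∀ j ∈ J l, ∀ k ∈ K l, ∫ ω, R ω j k ∂μ = 0)
    (hRvar : ∀ l : Fin q, ∀ j ∈ J l, ∀ k ∈ K l, ∫ ω, (R ω j k) ^ 2 ∂μ = 1)
    (hRzero : ∀ j k, (∀ l : Fin q, j ∉ J l ∨ k ∉ K l) → ∀ ω, R ω j k = 0)
    (D : Matrix (Fin n) (Fin n) ℝ) (hDdiag : ∀ i j, i ≠ j → D i j = 0)
    -- M S has orthonormal columns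
    (M : Matrix (Fin m) (Fin n) ℝ)
    (hMS : (M * S).transpose * (M * S) = 1)
    -- the diagonal scaling D_jj = ‖M_{·J_l}‖_F⁻¹ for j ∈ J_l
    (hDscale : ∀ l : Fin q, ∀ j ∈ J l,
      D j j = (Real.sqrt (∑ i, ∑ j' ∈ J l, (M i j') ^ 2))⁻¹)
    (u : Fin p → ℝ) :
    ∫ ω, ∑ i,
        (((M * (S * Z.transpose + D * R ω * (1 - Z * Z.transpose))).mulVec u) i) ^ 2 ∂μ
      = ∑ k, (u k) ^ 2 := by
  classical
  have hD : D = diagonal fun j => D j j := (IsDiag.diagonal_diag fun i j h => hDdiag i j h).symm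
  have hX : ∀ ω, (M * (S * Zᵀ + D * R ω * (1 - Z * Zᵀ))) *ᵥ u = fun i =>
      ((M * S) *ᵥ (Zᵀ *ᵥ u)) i + ∑ t : Fin n × Fin p,
        M i t.1 * D t.1 t.1 * ((1 - Z * Zᵀ) *ᵥ u) t.2 * R ω t.1 t.2 := by
    intro ω
    ext i
    rw [Matrix.mul_add, add_mulVec, ← Matrix.mul_assoc, ← mulVec_mulVec, Pi.add_apply]
    conv_lhs => rw [hD, mul_diagonal_mul_mul_mulVec_apply]
  have hσ : ∀ k, ∑ j, (∑ i, M i j ^ 2) * D j j ^ 2 * ∫ ω, R ω j k ^ 2 ∂μ = 1 := by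
    intro k
    obtain ⟨l, hk⟩ := hKcover k
    simp only [integral_entry_sq_eq_ite hKdisj hRvar hRzero hk, mul_ite, mul_one, mul_zero,
      Finset.sum_ite_mem, Finset.univ_inter]
    rw [Finset.sum_congr rfl fun j hj => by rw [hDscale l j hj]]
    exact sum_sum_sq_mul_inv_sqrt_sq M (J l)
      (sum_sum_sq_pos_of_transpose_mul_self_eq_one hMS fun j hj => (hJ l j).2 hj)
  simp_rw [hX]
  rw [integral_sum_sq_const_add_sum_mul (X := fun t ω => R ω t.1 t.2)
      (fun t => memLp_entry hRmeas hRvar hRzero t.1 t.2) (fun _ _ h => hRindep.indepFun h)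
      (fun t => integral_entry_eq_zero hRmean hRzero t.1 t.2),
    sum_sq_mulVec_of_transpose_mul_self_eq_one hMS,
    sum_sum_sq_mul_mul_eq_sum_sq M (fun j => D j j) _ _ hσ]
  exact sum_sq_transpose_mulVec_add_sum_sq_one_sub_mulVec
    (transpose_mul_self_eq_one_of_disjoint_support hZnorm hZdisj) u

/-- In the block-random construction `X = S Zᵀ + D R (I − Z Zᵀ)`, if `M S`
has orthonormal columns and the diagonal scaling is `D_{jj} = ‖M_{·J_l}‖_F⁻¹` for
`j ∈ J_l`, then `E‖M X u‖² = ‖u‖²` for every `u ∈ ℝ^p`. -/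
theorem X_expectation_scaled
    (m n p q : ℕ)
    (Ω : Type*) [MeasurableSpace Ω] (μ : Measure Ω) [IsProbabilityMeasure μ]
    (S : Matrix (Fin n) (Fin q) ℝ)
    (hScol : ∀ l, ∃ j, S j l ≠ 0)
    (hSdisj : ∀ l l' : Fin q, l ≠ l' → ∀ j, S j l = 0 ∨ S j l' = 0)
    (Z : Matrix (Fin p) (Fin q) ℝ)
    (hZnorm : ∀ l, ∑ k, (Z k l) ^ 2 = 1)
    (hZdisj : ∀ l l' : Fin q, l ≠ l' → ∀ k, Z k l = 0 ∨ Z k l' = 0)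
    (J : Fin q → Finset (Fin n)) (hJ : ∀ l j, j ∈ J l ↔ S j l ≠ 0)
    (K : Fin q → Finset (Fin p))
    (hKdisj : ∀ l l', l ≠ l' → Disjoint (K l) (K l'))
    (hKcover : ∀ k, ∃ l, k ∈ K l)
    (hZsupp : ∀ l k, Z k l ≠ 0 → k ∈ K l)
    (R : Ω → Matrix (Fin n) (Fin p) ℝ)
    (hRmeas : ∀ j k, Measurable (fun ω => R ω j k))
    (hRindep : iIndepFun
        (fun jk : Fin n × Fin p => fun ω => R ω jk.1 jk.2) μ)
    (hRmean : ∀ l : Fin q, ∀ j ∈ J l, ∀ k ∈ K l, ∫ ω, R ω j k ∂μ = 0)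
    (hRvar : ∀ l : Fin q, ∀ j ∈ J l, ∀ k ∈ K l, ∫ ω, (R ω j k) ^ 2 ∂μ = 1)
    (hRzero : ∀ j k, (∀ l : Fin q, j ∉ J l ∨ k ∉ K l) → ∀ ω, R ω j k = 0)
    (D : Matrix (Fin n) (Fin n) ℝ) (hDdiag : ∀ i j, i ≠ j → D i j = 0)
    -- M S has orthonormal columns
    (M : Matrix (Fin m) (Fin n) ℝ)
    (hMS : (M * S).transpose * (M * S) = 1)
    -- the diagonal scaling D_jj = ‖M_{·J_l}‖_F⁻¹ for j ∈ J_l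
    (hDscale : ∀ l : Fin q, ∀ j ∈ J l,
      D j j = (Real.sqrt (∑ i, ∑ j' ∈ J l, (M i j') ^ 2))⁻¹)
    (u : Fin p → ℝ) :
    ∫ ω, ∑ i,
        (((M * (S * Z.transpose + D * R ω * (1 - Z * Z.transpose))).mulVec u) i) ^ 2 ∂μ
      = ∑ k, (u k) ^ 2 :=
  X_expectation_scaled_general m n p q Ω μ S Z hZnorm hZdisj J hJ K hKdisj hKcover R hRmeas hRindep
    hRmean hRvar hRzero D hDdiag M hMS hDscale u
end
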